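/- Let g ⊆ so(V) be a Lie subalgebra with K(g,V) = {0}. Then the skew-symmetric prolongation of g vanishes: if T ∈ Λ³V satisfies T_X ∈ g for all X ∈ V, then T = 0. -/
import Mathlib


open scoped RealInnerProductSpace BigOperators

noncomputable section

variable {V : Type} [NormedAddCommGroup V] [InnerProductSpace ℝ V] [FiniteDimensional ℝ V]

/-- A skew-symmetric endomorphism of a real inner product space. -/
def IsSkew (A : V →ₗ[ℝ] V) : Prop := ∀ x y : V, ⟪A x, y⟫ = - ⟪x, A y⟫

/-- Membership in `K(g,V)`: a `g`-valued algebraic curvature tensor, i.e. an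
antisymmetric bilinear map `V × V → g` satisfying the first Bianchi identity. -/
def IsCurv (g : Submodule ℝ (V →ₗ[ℝ] V))
    (R : V →ₗ[ℝ] V →ₗ[ℝ] (V →ₗ[ℝ] V)) : Prop :=
  (∀ X Y : V, R X Y ∈ g) ∧
  (∀ X Y : V, R X Y = - R Y X) ∧
  (∀ X Y Z : V, R X Y Z + R Y Z X + R Z X Y = 0)

theorem stmt_9
    (g : Submodule ℝ (V →ₗ[ℝ] V))
    (hgskew : ∀ A ∈ g, IsSkew A)
    (hglie : ∀ A ∈ g, ∀ B ∈ g, A ∘ₗ B - B ∘ₗ A ∈ g)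
    (hK : ∀ R : V →ₗ[ℝ] V →ₗ[ℝ] (V →ₗ[ℝ] V), IsCurv g R → R = 0)
    (T : AlternatingMap ℝ V ℝ (Fin 3))
    (TX : V → (V →ₗ[ℝ] V))
    (hTX : ∀ X Y Z : V, ⟪TX X Y, Z⟫ = T ![X, Y, Z])
    (hTg : ∀ X : V, TX X ∈ g) :
    T = 0 := by
  -- basic symmetry facts about T
  have sw01 : ∀ a b c : V, T ![b, a, c] = - T ![a, b, c] := by
    intro a b c
    have h := T.map_swap ![a,b,c] (i := 0) (j := 1) (by decide)
    rw [← h]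
    congr 1
    funext i; fin_cases i <;> simp [Equiv.swap_apply_def]
  have sw12 : ∀ a b c : V, T ![a, c, b] = - T ![a, b, c] := by
    intro a b c
    have h := T.map_swap ![a,b,c] (i := 1) (j := 2) (by decide)
    rw [← h]
    congr 1
    funext i; fin_cases i <;> simp [Equiv.swap_apply_def]
  have cyc : ∀ a b c : V, T ![c, a, b] = T ![a, b, c] := by
    intro a b c
    have h1 := sw01 c a b
    have h2 := sw12 a b c
    linarith
  -- linearity of TX in the first argument
  have upd0 : ∀ a b c x : V, ![x, b, c] = Function.update ![a, b, c] 0 x := by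
    intro a b c x; funext i; fin_cases i <;> simp
  have hadd : ∀ X X' : V, TX (X + X') = TX X + TX X' := by
    intro X X'
    ext Y
    apply ext_inner_right ℝ
    intro Z
    simp only [LinearMap.add_apply, inner_add_left, hTX]
    rw [upd0 X Y Z (X + X'), T.map_update_add, ← upd0 X Y Z X, ← upd0 X Y Z X']
  have hsmul : ∀ (r : ℝ) (X : V), TX (r • X) = r • TX X := by
    intro r X
    ext Y
    apply ext_inner_right ℝ
    intro Z
    simp only [LinearMap.smul_apply, real_inner_smul_left, hTX]
    rw [upd0 X Y Z (r • X), T.map_update_smul, ← upd0 X Y Z X]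
    simp
  have hneg : ∀ u : V, TX (-u) = - TX u := by
    intro u
    have h := hsmul (-1 : ℝ) u
    simpa using h
  -- pointwise antisymmetry
  have skewpair : ∀ a b : V, TX a b = - TX b a := by
    intro a b
    apply ext_inner_right ℝ
    intro z
    rw [inner_neg_left, hTX, hTX]
    linarith [sw01 a b z]
  have tzz : ∀ a : V, TX a a = 0 := by
    intro a
    apply ext_inner_right ℝ
    intro z
    rw [hTX, inner_zero_left]
    exact T.map_eq_zero_of_eq _ (i := (0 : Fin 3)) (j := 1) (by simp) (by decide)
  -- key inner product identities
  have e1 : ∀ a b c d : V, ⟪TX a (TX b c), d⟫ = - ⟪TX a d, TX b c⟫ := by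
    intro a b c d
    rw [hTX, hTX a d (TX b c)]
    linarith [sw12 a (TX b c) d]
  have e2 : ∀ a b c d : V, ⟪TX (TX a b) c, d⟫ = ⟪TX c d, TX a b⟫ := by
    intro a b c d
    rw [hTX, hTX c d (TX a b)]
    exact cyc c d (TX a b)
  -- the curvature tensor R(X,Y) = [T_X, T_Y] + 2 T_{T_X Y}
  set R : V →ₗ[ℝ] V →ₗ[ℝ] (V →ₗ[ℝ] V) := LinearMap.mk₂ ℝ
    (fun X Y => TX X ∘ₗ TX Y - TX Y ∘ₗ TX X + (2 : ℝ) • TX (TX X Y))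
    (by
      intro m m' n
      simp only [hadd, LinearMap.add_apply, LinearMap.add_comp, LinearMap.comp_add, smul_add]
      abel)
    (by
      intro r m n
      simp only [hsmul, LinearMap.smul_apply, LinearMap.smul_comp, LinearMap.comp_smul,
        smul_sub, smul_add]
      module)
    (by
      intro m n n'
      simp only [map_add, hadd, LinearMap.add_comp, LinearMap.comp_add, smul_add]
      abel)
    (by
      intro r m n
      simp only [map_smul, hsmul, LinearMap.smul_comp, LinearMap.comp_smul,
        smul_sub, smul_add]
      module) with hRdef
  have hRapp : ∀ X Y : V, R X Y = TX X ∘ₗ TX Y - TX Y ∘ₗ TX X + (2 : ℝ) • TX (TX X Y) := by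
    intro X Y; rw [hRdef]; rfl
  have hcurv : IsCurv g R := by
    refine ⟨?_, ?_, ?_⟩
    · intro X Y
      rw [hRapp]
      exact g.add_mem (hglie _ (hTg X) _ (hTg Y)) (g.smul_mem _ (hTg _))
    · intro X Y
      rw [hRapp, hRapp, skewpair Y X, hneg]
      simp only [smul_neg]
      abel
    · intro X Y Z
      apply ext_inner_right ℝ
      intro W
      rw [hRapp, hRapp, hRapp]
      simp only [LinearMap.add_apply, LinearMap.sub_apply, LinearMap.smul_apply,
        LinearMap.comp_apply, inner_add_left, inner_sub_left, real_inner_smul_left,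
        inner_zero_left, e1, e2]
      rw [skewpair X Z, skewpair Y X, skewpair Z Y]
      simp only [inner_neg_right]
      ring
  have hR0 : R = 0 := hK R hcurv
  have hTXzero : ∀ X Y : V, TX X Y = 0 := by
    intro X Y
    have h1 : ⟪(R X Y) Y, X⟫ = 0 := by rw [hR0]; simp
    have h2 : ⟪(R X Y) Y, X⟫ = -3 * ⟪TX X Y, TX X Y⟫ := by
      rw [hRapp]
      simp only [LinearMap.add_apply, LinearMap.sub_apply, LinearMap.smul_apply,
        LinearMap.comp_apply, inner_add_left, inner_sub_left, real_inner_smul_left,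
        tzz Y, map_zero, inner_zero_left]
      rw [e1 Y X Y X, e2 X Y Y X, skewpair Y X]
      simp only [inner_neg_left]
      ring
    have h3 : ⟪TX X Y, TX X Y⟫ = 0 := by
      rw [h2] at h1; linarith
    exact inner_self_eq_zero.mp h3
  ext m
  have hm : m = ![m 0, m 1, m 2] := by funext i; fin_cases i <;> simp
  calc T m = T ![m 0, m 1, m 2] := by rw [← hm]
    _ = ⟪TX (m 0) (m 1), m 2⟫ := (hTX _ _ _).symm
    _ = 0 := by rw [hTXzero]; simp
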